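/- Let I ≥ 2 be an integer and S > 0 a real number, and define ψ : [0,1) → ℝ by ψ(ρ) = −(1/2)·log((1+(I−1)ρ)(1−ρ)^{I−1}) − I·S·ρ/(2(1−ρ)). For ρ ∈ [0,1), the derivative ψ'(ρ) is nonnegative if and only if both S ≤ (√I−1)/(√I+1) holds and ρ lies in the closed interval [ρ̂₋, ρ̂₊], where ρ̂₋ = (1/2)(1−S)(1 − √(1 − 4S/((I−1)(1−S)²))) and ρ̂₊ = (1/2)(1−S)(1 + √(1 − 4S/((I−1)(1−S)²))). -/

import Mathlib

open Real Set

/-- `ψ(ρ) = log χ(ρ)`, the log of the likelihood ratio factor in an ANOVA study with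
`I` cells and normalized within-group sum of squares `S`. -/
noncomputable def psiFun (I : ℕ) (S ρ : ℝ) : ℝ :=
  -(1 / 2) * Real.log ((1 + ((I : ℝ) - 1) * ρ) * (1 - ρ) ^ (I - 1)) -
    (I : ℝ) * S * ρ / (2 * (1 - ρ))

/-- The lower root `ρ̂₋`. -/
noncomputable def rhoHatMinus (I : ℕ) (S : ℝ) : ℝ :=
  (1 / 2) * (1 - S) * (1 - Real.sqrt (1 - 4 * S / (((I : ℝ) - 1) * (1 - S) ^ 2)))

/-- The upper root `ρ̂₊`. -/
noncomputable def rhoHatPlus (I : ℕ) (S : ℝ) : ℝ :=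
  (1 / 2) * (1 - S) * (1 + Real.sqrt (1 - 4 * S / (((I : ℝ) - 1) * (1 - S) ^ 2)))

/-!
Writing `c = I - 1`, `ψ'(ρ) = I / (2 (1-ρ)² (1 + cρ)) · q(ρ)` with the concave quadratic
`q(ρ) = psiNumerator c S ρ = cρ(1-ρ) - S(1 + cρ)`, whose roots are `ρ̂₋ ≤ ρ̂₊` as soon as `4S ≤ c(1-S)²`.
If `S ≥ 1` or `c(1-S)² < 4S`, then `q < 0` on `[0, ∞)`. Finally `S < 1 ∧ 4S ≤ c(1-S)²` is
`S ≤ (√I-1)/(√I+1)`: the latter reads `1 + S ≤ √I (1-S)`, and `(1+S)² - (1-S)² = 4S`.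
-/

open Filter Topology

def psiNumerator (c S ρ : ℝ) : ℝ :=
  c * ρ * (1 - ρ) - S * (1 + c * ρ)

theorem le_sqrt_sub_one_div_sqrt_add_one_iff {t S : ℝ} (ht : 0 ≤ t) (hS : 0 ≤ S) :
    S ≤ (√t - 1) / (√t + 1) ↔ S < 1 ∧ 4 * S ≤ (t - 1) * (1 - S) ^ 2 := by
  have hu : 0 ≤ √t := sqrt_nonneg t
  have hsq : 4 * S ≤ (t - 1) * (1 - S) ^ 2 ↔ (1 + S) ^ 2 ≤ (√t * (1 - S)) ^ 2 := by
    rw [mul_pow, sq_sqrt ht]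
    constructor <;> intro h <;> nlinarith
  rw [le_div_iff₀ (by positivity), hsq]
  constructor
  · intro h
    have hS1 : S < 1 := by nlinarith
    exact ⟨hS1, pow_le_pow_left₀ (by linarith) (by linarith) 2⟩
  · rintro ⟨hS1, h⟩
    have := (pow_le_pow_iff_left₀ (by linarith) (by nlinarith) two_ne_zero).1 h
    linarith

theorem hasDerivAt_psiFun {I : ℕ} (hI : 1 ≤ I) (S : ℝ) {ρ : ℝ}
    (hρ : 0 < 1 + ((I : ℝ) - 1) * ρ) (hρ1 : ρ < 1) :
    HasDerivAt (psiFun I S)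
      (I / (2 * (1 - ρ) ^ 2 * (1 + (I - 1) * ρ)) * psiNumerator (I - 1) S ρ) ρ := by
  have h1ρ : 0 < 1 - ρ := by linarith
  have hlog : psiFun I S =ᶠ[𝓝 ρ] fun x => -(1 / 2) *
      (log (1 + ((I : ℝ) - 1) * x) + ((I : ℝ) - 1) * log (1 - x)) - I * S * x / (2 * (1 - x)) := by
    have hA : ∀ᶠ x in 𝓝 ρ, 0 < 1 + ((I : ℝ) - 1) * x :=
      continuousAt_const.eventually_lt (by fun_prop) hρ
    have hB : ∀ᶠ x in 𝓝 ρ, 0 < 1 - x :=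
      continuousAt_const.eventually_lt (by fun_prop) h1ρ
    filter_upwards [hA, hB] with x hx1 hx2
    rw [psiFun, log_mul hx1.ne' (pow_pos hx2 _).ne', log_pow, Nat.cast_sub hI, Nat.cast_one]
  refine HasDerivAt.congr_of_eventuallyEq ?_ hlog
  have h1 := (((hasDerivAt_id ρ).const_mul ((I : ℝ) - 1)).const_add 1).log hρ.ne'
  have h2 := ((hasDerivAt_id ρ).const_sub 1).log h1ρ.ne'
  have h3 := ((hasDerivAt_id ρ).const_mul ((I : ℝ) * S)).div
    (((hasDerivAt_id ρ).const_sub 1).const_mul 2) (by positivity)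
  refine (((h1.add (h2.const_mul ((I : ℝ) - 1))).const_mul (-(1 / 2))).sub h3).congr_deriv ?_
  have hA := hρ.ne'
  have hB := h1ρ.ne'
  simp only [id, psiNumerator]
  field_simp
  ring

theorem psiNumerator_eq_mul_neg_sub_mul_sub {c S s : ℝ}
    (hs : c * (1 - S) ^ 2 * s ^ 2 = c * (1 - S) ^ 2 - 4 * S) (ρ : ℝ) :
    psiNumerator c S ρ =
      c * -((ρ - 1 / 2 * (1 - S) * (1 - s)) * (ρ - 1 / 2 * (1 - S) * (1 + s))) := by
  rw [psiNumerator]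
  linear_combination (-(1 / 4) : ℝ) * hs

theorem psiNumerator_neg {c S ρ : ℝ} (hc : 0 ≤ c) (hS : 0 < S) (hρ : 0 ≤ ρ)
    (h : S < 1 → c * (1 - S) ^ 2 < 4 * S) : psiNumerator c S ρ < 0 := by
  rw [psiNumerator]
  by_cases hS1 : S < 1
  · -- `-4 q(ρ) = c (2ρ - (1 - S))² + 4S - c (1 - S)²`
    nlinarith [mul_nonneg hc (sq_nonneg (2 * ρ - (1 - S))), h hS1]
  · nlinarith [mul_nonneg (mul_nonneg hc hρ) hρ,
      mul_nonneg (mul_nonneg hc hρ) (sub_nonneg.2 (not_lt.1 hS1))]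

theorem psiNumerator_nonneg_iff {I : ℕ} (hI : 1 ≤ I) {S ρ : ℝ} (hS : 0 < S) (hρ : 0 ≤ ρ) :
    0 ≤ psiNumerator (I - 1) S ρ ↔
      S ≤ (√I - 1) / (√I + 1) ∧ rhoHatMinus I S ≤ ρ ∧ ρ ≤ rhoHatPlus I S := by
  have hc : (0 : ℝ) ≤ I - 1 := sub_nonneg.2 (Nat.one_le_cast.2 hI)
  rw [le_sqrt_sub_one_div_sqrt_add_one_iff (Nat.cast_nonneg I) hS.le]
  by_cases hdisc : S < 1 ∧ 4 * S ≤ (I - 1) * (1 - S) ^ 2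
  · obtain ⟨hS1, h4⟩ := hdisc
    have hpos : 0 < ((I : ℝ) - 1) * (1 - S) ^ 2 := by linarith
    have hD : 0 ≤ 1 - 4 * S / (((I : ℝ) - 1) * (1 - S) ^ 2) := by
      rw [sub_nonneg, div_le_one hpos]
      exact h4
    have hs : ((I : ℝ) - 1) * (1 - S) ^ 2 * √(1 - 4 * S / (((I : ℝ) - 1) * (1 - S) ^ 2)) ^ 2 =
        ((I : ℝ) - 1) * (1 - S) ^ 2 - 4 * S := by
      rw [sq_sqrt hD, mul_sub, mul_div_cancel₀ _ hpos.ne', mul_one]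
    have hroots : rhoHatMinus I S ≤ rhoHatPlus I S := by
      unfold rhoHatMinus rhoHatPlus
      nlinarith [sqrt_nonneg (1 - 4 * S / (((I : ℝ) - 1) * (1 - S) ^ 2))]
    rw [psiNumerator_eq_mul_neg_sub_mul_sub hs,
      mul_nonneg_iff_of_pos_left (pos_of_mul_pos_left hpos (sq_nonneg _)), neg_nonneg]
    simp only [hS1, h4, and_self, true_and]
    exact sub_mul_sub_nonpos_iff ρ hroots
  · simp only [hdisc, false_and, iff_false, not_le]
    exact psiNumerator_neg hc hS hρ fun hS1 => lt_of_not_ge fun h4 => hdisc ⟨hS1, h4⟩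

theorem deriv_psi_nonneg_iff (I : ℕ) (hI : 2 ≤ I) (S : ℝ) (hS : 0 < S) :
    ∀ ρ ∈ Ico (0 : ℝ) 1,
      (0 ≤ deriv (psiFun I S) ρ ↔
        S ≤ (Real.sqrt I - 1) / (Real.sqrt I + 1) ∧
          rhoHatMinus I S ≤ ρ ∧ ρ ≤ rhoHatPlus I S) := by
  rintro ρ ⟨hρ0, hρ1⟩
  have hI1 : 1 ≤ I := by omega
  have hc : (0 : ℝ) ≤ I - 1 := sub_nonneg.2 (Nat.one_le_cast.2 hI1)
  have hA : 0 < 1 + ((I : ℝ) - 1) * ρ := by positivity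
  have h1ρ : 0 < 1 - ρ := by linarith
  rw [(hasDerivAt_psiFun hI1 S hA hρ1).deriv, mul_nonneg_iff_of_pos_left (by positivity)]
  exact psiNumerator_nonneg_iff hI1 hS hρ0
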